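/- Fix i ∈ I and assume λ_0(i) ∈ ℤ_{≥0}. If the generic tuple of monic polynomials y = (y_j)_{j∈I} represents a critical point, then there exists a polynomial Y ∈ ℂ[x] satisfying the Wronskian equation y_i·Y′ − y_i′·Y = x^{λ_0(i)}·T_i(x)·∏_{j ≠ i} y_j(x)^{−a_{ij}} (note that −a_{ij} ≥ 0 for j ≠ i, so the right-hand side is a polynomial). Equivalently, the function y_i^{(i)}(x) := y_i(x)·∫^x ξ^{λ_0(i)} T_i(ξ) ∏_{j∈I} y_j(ξ)^{−a_{ij}} dξ is a polynomial. -/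

import Mathlib

open Polynomial

noncomputable section

variable {I : Type} [Fintype I] [DecidableEq I]

/-- T_i(x) = ∏_{s=1}^N ∏_{k=0}^{M−1} (x − ω^k z_s)^{λ_s(σ^{−k} i)}. -/
def Tpoly (σ : Equiv.Perm I) (M : ℕ) {N : ℕ} (ω : ℂ) (z : Fin N → ℂ)
    (lam : Fin N → I → ℕ) (i : I) : Polynomial ℂ :=
  ∏ s, ∏ k ∈ Finset.range M, (X - C (ω ^ k * z s)) ^ (lam s ((σ⁻¹ ^ k) i))

/-- A generic tuple of monic polynomials: for each i the roots of y_i are simple and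
nonzero, and y_i shares no root with T_i nor with any y_j (j ≠ i) with a_{ij} ≠ 0. -/
def GenericTuple (a : I → I → ℤ) (σ : Equiv.Perm I) (M : ℕ) {N : ℕ} (ω : ℂ)
    (z : Fin N → ℂ) (lam : Fin N → I → ℕ) (y : I → Polynomial ℂ) : Prop :=
  ∀ i, (y i).Monic ∧ Squarefree (y i) ∧ (y i).eval 0 ≠ 0 ∧
    IsCoprime (y i) (Tpoly σ M ω z lam i) ∧
    ∀ j, j ≠ i → a i j ≠ 0 → IsCoprime (y i) (y j)

open Classical in
/-- S_j(t) = Σ_{t' root of y_j, t' ≠ t} 1/(t − t'). -/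
def Sres (y : I → Polynomial ℂ) (j : I) (t : ℂ) : ℂ :=
  (((y j).roots.filter (fun t' => t' ≠ t)).map fun t' => (t - t')⁻¹).sum

/-- A generic tuple y represents a critical point of the extended master function:
the Bethe equations hold at every root of every y_i. -/
def RepCrit (a : I → I → ℤ) (σ : Equiv.Perm I) (M : ℕ) {N : ℕ} (ω : ℂ) (z : Fin N → ℂ)
    (lam : Fin N → I → ℕ) (lam0 : I → ℂ) (y : I → Polynomial ℂ) : Prop :=
  GenericTuple a σ M ω z lam y ∧
  ∀ i, ∀ t ∈ (y i).roots,
    (∑ k ∈ Finset.range M, ∑ s, ((lam s ((σ⁻¹ ^ k) i) : ℕ) : ℂ) / (t - ω ^ k * z s)) +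
      lam0 i / t - (∑ j, ((a i j : ℤ) : ℂ) * Sres y j t) = 0

/-- The tuple y is cyclotomic: y_{σj}(ωx) = ω^{deg y_j} y_j(x) for all j. -/
def CycTupleGen (σ : Equiv.Perm I) (ω : ℂ) (y : I → Polynomial ℂ) : Prop :=
  ∀ j, (y (σ j)).comp (C ω * X) = C (ω ^ (y j).natDegree) * y j

/-!
The equation `y Y' - y' Y = P` says `(Y / y)' = P / y²`, so for squarefree `y` it has a
polynomial solution as soon as `P / y²` has no residues, i.e. `P'(t) y'(t) = P(t) y''(t)` at
every root `t` of `y`. For `y = y_i` and `P = x^{λ₀(i)} T_i ∏_{j ≠ i} y_j^{-a_{ij}}`, at a root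
`t` of `y_i` one has `y_i''(t) = 2 y_i'(t) S_i(t)`, while `P'(t) / P(t)` is the sum of the
logarithmic derivatives of the factors of `P`; the Bethe equation at `t` says exactly that this
sum equals `2 S_i(t)`.
-/

namespace Polynomial

section LogDeriv

variable {R : Type*} [CommRing R]

/-- `L` is the logarithmic derivative `f'/f` of `f` at `t`, written without division. -/
def HasLogDerivAt (f : R[X]) (t L : R) : Prop :=
  eval t (derivative f) = eval t f * L

theorem HasLogDerivAt.mul {f g : R[X]} {t L L' : R} (hf : HasLogDerivAt f t L)
    (hg : HasLogDerivAt g t L') : HasLogDerivAt (f * g) t (L + L') := by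
  unfold HasLogDerivAt at *
  rw [derivative_mul, eval_add, eval_mul, eval_mul, eval_mul, hf, hg]
  ring

theorem HasLogDerivAt.prod {ι : Type*} {s : Finset ι} {f : ι → R[X]} {t : R} {L : ι → R}
    (h : ∀ b ∈ s, HasLogDerivAt (f b) t (L b)) :
    HasLogDerivAt (∏ b ∈ s, f b) t (∑ b ∈ s, L b) := by
  classical
  induction s using Finset.induction_on with
  | empty => simp [HasLogDerivAt]
  | insert b s hb ih =>
    rw [Finset.prod_insert hb, Finset.sum_insert hb]
    exact (h b (s.mem_insert_self b)).mul (ih fun c hc => h c (Finset.mem_insert_of_mem hc))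

theorem HasLogDerivAt.pow {f : R[X]} {t L : R} (hf : HasLogDerivAt f t L) (n : ℕ) :
    HasLogDerivAt (f ^ n) t (n * L) := by
  simpa using HasLogDerivAt.prod (s := Finset.range n) fun _ _ => hf

theorem eval_derivative_derivative_X_sub_C_mul {u : R[X]} {t L : R}
    (hu : HasLogDerivAt u t L) :
    eval t (derivative (derivative ((X - C t) * u))) =
      2 * eval t (derivative ((X - C t) * u)) * L := by
  simp only [derivative_mul, derivative_add, derivative_sub, derivative_X, derivative_C,
    sub_zero, one_mul, zero_mul, eval_add, eval_mul, eval_sub, eval_X, eval_C, sub_self]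
  rw [hu]
  ring

theorem _root_.IsCoprime.eval_ne_zero_of_isRoot [Nontrivial R] {p q : R[X]} {t : R}
    (h : IsCoprime p q) (hp : p.IsRoot t) : eval t q ≠ 0 := fun hq => by
  obtain ⟨u, v, huv⟩ := h
  simpa [hp.eq_zero, hq] using congrArg (eval t) huv

end LogDeriv

section Field

variable {K : Type*} [Field K]

theorem hasLogDerivAt_X_sub_C {c t : K} (h : t - c ≠ 0) :
    HasLogDerivAt (X - C c) t (t - c)⁻¹ := by
  simp [HasLogDerivAt, h]

theorem hasLogDerivAt_X_sub_C_pow {c t : K} {n : ℕ} (h : eval t ((X - C c) ^ n) ≠ 0) :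
    HasLogDerivAt ((X - C c) ^ n) t (n * (t - c)⁻¹) := by
  rcases n.eq_zero_or_pos with rfl | hn
  · simp [HasLogDerivAt]
  · refine (hasLogDerivAt_X_sub_C ?_).pow n
    simpa [hn.ne'] using h

theorem Splits.hasLogDerivAt {f : K[X]} (hf : f.Splits) {t : K} (ht : eval t f ≠ 0) :
    HasLogDerivAt f t (f.roots.map fun z => (t - z)⁻¹).sum := by
  simpa only [HasLogDerivAt, one_div] using hf.eval_derivative_eq_eval_mul_sum ht

theorem Splits.eval_derivative_derivative_of_mem_roots [DecidableEq K] {f : K[X]} (hf : f.Splits)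
    (hnd : f.roots.Nodup) {t : K} (ht : t ∈ f.roots) :
    eval t (derivative (derivative f)) =
      2 * eval t (derivative f) * ((f.roots.erase t).map fun z => (t - z)⁻¹).sum := by
  set u := f /ₘ (X - C t)
  have hfu : (X - C t) * u = f := mul_divByMonic_eq_iff_isRoot.2 (isRoot_of_mem_roots ht)
  have hf0 : f ≠ 0 := ne_zero_of_mem_roots ht
  have hroots : f.roots = t ::ₘ u.roots := by
    rw [← hfu, roots_mul (hfu ▸ hf0), roots_X_sub_C, Multiset.singleton_add]
  have hut : eval t u ≠ 0 := fun h0 =>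
    (Multiset.nodup_cons.1 (hroots ▸ hnd)).1 <|
      (mem_roots (right_ne_zero_of_mul (hfu ▸ hf0))).2 h0
  have hu : u.Splits := hf.of_dvd hf0 ⟨X - C t, by rw [← hfu, mul_comm]⟩
  rw [hroots, Multiset.erase_cons_head, ← hfu]
  exact eval_derivative_derivative_X_sub_C_mul (hu.hasLogDerivAt hut)

theorem dvd_of_forall_mem_roots_isRoot [PerfectField K] {f g : K[X]} (hf : f.Splits)
    (hsf : Squarefree f) (h : ∀ t ∈ f.roots, g.IsRoot t) : f ∣ g := by
  rcases eq_or_ne g 0 with rfl | hg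
  · exact dvd_zero f
  refine hf.dvd_of_roots_le_roots hsf.ne_zero ?_
  rw [Multiset.le_iff_subset (nodup_roots (PerfectField.separable_iff_squarefree.2 hsf))]
  exact fun t ht => (mem_roots hg).2 (h t ht)

end Field

section Antiderivative

variable {K : Type*} [Field K] [CharZero K]

def antiderivative (p : K[X]) : K[X] :=
  ∑ n ∈ p.support, C (p.coeff n / (n + 1)) * X ^ (n + 1)

theorem derivative_antiderivative (p : K[X]) : derivative (antiderivative p) = p := by
  rw [antiderivative, derivative_sum]
  conv_rhs => rw [p.as_sum_support_C_mul_X_pow]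
  refine Finset.sum_congr rfl fun n _ => ?_
  rw [derivative_C_mul, derivative_X_pow, Nat.add_sub_cancel, ← mul_assoc, ← C_mul]
  push_cast
  rw [div_mul_cancel₀ _ (Nat.cast_add_one_ne_zero n)]

end Antiderivative

section Wronskian

variable {K : Type*} [Field K]

/-- If `y` and `y'` are coprime, `u y + v y' = 1`, then `Y₀ = -vP` solves `W(y, Y₀) ≡ P mod y`. -/
theorem exists_wronskian_congr_of_isCoprime {y : K[X]} (hy : IsCoprime y (derivative y))
    (P : K[X]) : ∃ Y₀ Q, P - wronskian y Y₀ = y * Q := by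
  obtain ⟨u, v, huv⟩ := hy
  refine ⟨-(v * P), u * P + derivative (v * P), ?_⟩
  rw [wronskian, derivative_neg]
  linear_combination (-P) * huv

/-- Differentiating `P - W(y, Y₀) = y Q` and evaluating at a root `t` of `y` gives
`y'(t)² Q(t) = y'(t) P'(t) - y''(t) P(t)`. -/
theorem dvd_of_sub_wronskian_eq_mul [PerfectField K] {y P Y₀ Q : K[X]} (hy : y.Splits)
    (hsf : Squarefree y)
    (hP : ∀ t ∈ y.roots, eval t (derivative P) * eval t (derivative y) =
      eval t P * eval t (derivative (derivative y)))
    (hQ : P - wronskian y Y₀ = y * Q) : y ∣ Q := by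
  refine dvd_of_forall_mem_roots_isRoot hy hsf fun t ht => ?_
  have hyt : eval t y = 0 := isRoot_of_mem_roots ht
  have hy't : eval t (derivative y) ≠ 0 :=
    (PerfectField.separable_iff_squarefree.2 hsf).aeval_derivative_ne_zero hyt
  have h0 := congrArg (eval t) hQ
  have h1 := congrArg (eval t ∘ derivative) hQ
  simp only [Function.comp_apply, wronskian, derivative_sub, derivative_mul, eval_sub,
    eval_add, eval_mul, hyt, zero_mul, add_zero] at h0 h1
  have h2 : eval t (derivative y) ^ 2 * eval t Q = 0 := by
    linear_combination -eval t (derivative y) * h1 + eval t (derivative (derivative y)) * h0 +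
      hP t ht
  simpa [hy't] using h2

theorem exists_wronskian_eq [CharZero K] {y P : K[X]} (hy : y.Splits) (hsf : Squarefree y)
    (hP : ∀ t ∈ y.roots, eval t (derivative P) * eval t (derivative y) =
      eval t P * eval t (derivative (derivative y))) :
    ∃ Y, wronskian y Y = P := by
  obtain ⟨Y₀, Q, hQ⟩ :=
    exists_wronskian_congr_of_isCoprime (PerfectField.separable_iff_squarefree.2 hsf) P
  obtain ⟨R, rfl⟩ := dvd_of_sub_wronskian_eq_mul hy hsf hP hQ
  refine ⟨Y₀ + y * antiderivative R, ?_⟩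
  rw [wronskian] at hQ ⊢
  rw [derivative_add, derivative_mul, derivative_antiderivative]
  linear_combination (-1 : K[X]) * hQ

end Wronskian

end Polynomial

omit [Fintype I] [DecidableEq I] in
theorem Sres_eq_sum_erase (y : I → ℂ[X]) (j : I) (t : ℂ) (h : (y j).roots.Nodup) :
    Sres y j t = (((y j).roots.erase t).map fun z => (t - z)⁻¹).sum := by
  rw [Sres, h.erase_eq_filter]

omit [Fintype I] [DecidableEq I] in
theorem hasLogDerivAt_Tpoly (σ : Equiv.Perm I) (M : ℕ) {N : ℕ} (ω : ℂ) (z : Fin N → ℂ)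
    (lam : Fin N → I → ℕ) (i : I) {t : ℂ} (h : eval t (Tpoly σ M ω z lam i) ≠ 0) :
    HasLogDerivAt (Tpoly σ M ω z lam i) t
      (∑ k ∈ Finset.range M, ∑ s, ((lam s ((σ⁻¹ ^ k) i) : ℕ) : ℂ) / (t - ω ^ k * z s)) := by
  rw [Finset.sum_comm]
  simp only [div_eq_mul_inv]
  rw [Tpoly] at h ⊢
  simp only [eval_prod, Finset.prod_ne_zero_iff] at h
  exact .prod fun s hs => .prod fun k hk => hasLogDerivAt_X_sub_C_pow (h s hs k hk)

theorem hasLogDerivAt_X_pow_mul_Tpoly_mul_prod {a : I → I → ℤ} {σ : Equiv.Perm I} {M N : ℕ}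
    {ω : ℂ} {z : Fin N → ℂ} {lam : Fin N → I → ℕ} {y : I → ℂ[X]}
    (hgen : GenericTuple a σ M ω z lam y) {i : I} {t : ℂ} (ht : t ∈ (y i).roots) (n : ℕ) :
    HasLogDerivAt
      (X ^ n * Tpoly σ M ω z lam i * ∏ j ∈ Finset.univ.erase i, y j ^ (-(a i j)).toNat) t
      (n * t⁻¹ +
        (∑ k ∈ Finset.range M, ∑ s, ((lam s ((σ⁻¹ ^ k) i) : ℕ) : ℂ) / (t - ω ^ k * z s)) +
        ∑ j ∈ Finset.univ.erase i, ((-(a i j)).toNat : ℂ) * Sres y j t) := by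
  obtain ⟨-, -, hy0, hT, hcop⟩ := hgen i
  have hyt : (y i).IsRoot t := isRoot_of_mem_roots ht
  have hX : HasLogDerivAt X t t⁻¹ := by
    have ht0 : t ≠ 0 := by rintro rfl; exact hy0 hyt
    simp [HasLogDerivAt, ht0]
  refine ((hX.pow n).mul (hasLogDerivAt_Tpoly σ M ω z lam i (hT.eval_ne_zero_of_isRoot hyt))).mul
    (.prod fun j hj => ?_)
  by_cases haij : a i j = 0
  · simp [haij, HasLogDerivAt]
  have hyjt := (hcop j (Finset.ne_of_mem_erase hj) haij).eval_ne_zero_of_isRoot hyt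
  have hnd := nodup_roots (PerfectField.separable_iff_squarefree.2 (hgen j).2.1)
  rw [Sres_eq_sum_erase y j t hnd, Multiset.erase_of_notMem fun h => hyjt (isRoot_of_mem_roots h)]
  exact ((IsAlgClosed.splits _).hasLogDerivAt hyjt).pow _

theorem bethe_eq_two_mul_Sres {a : I → I → ℤ} {σ : Equiv.Perm I} {M N : ℕ} {ω : ℂ}
    {z : Fin N → ℂ} {lam : Fin N → I → ℕ} {lam0 : I → ℂ} {y : I → ℂ[X]} {i : I} {t : ℂ}
    (haii : a i i = 2) (haneg : ∀ j, i ≠ j → a i j ≤ 0) {n : ℕ} (hn : lam0 i = n)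
    (hbethe : (∑ k ∈ Finset.range M, ∑ s, ((lam s ((σ⁻¹ ^ k) i) : ℕ) : ℂ) / (t - ω ^ k * z s)) +
      lam0 i / t - (∑ j, ((a i j : ℤ) : ℂ) * Sres y j t) = 0) :
    n * t⁻¹ +
        (∑ k ∈ Finset.range M, ∑ s, ((lam s ((σ⁻¹ ^ k) i) : ℕ) : ℂ) / (t - ω ^ k * z s)) +
        ∑ j ∈ Finset.univ.erase i, ((-(a i j)).toNat : ℂ) * Sres y j t =
      2 * Sres y i t := by
  have hoff : ∑ j ∈ Finset.univ.erase i, ((-(a i j)).toNat : ℂ) * Sres y j t =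
      -∑ j ∈ Finset.univ.erase i, (a i j : ℂ) * Sres y j t := by
    rw [← Finset.sum_neg_distrib]
    refine Finset.sum_congr rfl fun j hj => ?_
    have hcast : ((-(a i j)).toNat : ℂ) = -(a i j : ℂ) := by
      exact_mod_cast Int.toNat_of_nonneg (neg_nonneg.2 (haneg j (Finset.ne_of_mem_erase hj).symm))
    rw [hcast, neg_mul]
  rw [← Finset.add_sum_erase _ _ (Finset.mem_univ i), haii, hn] at hbethe
  rw [hoff]
  rw [div_eq_mul_inv] at hbethe
  push_cast at hbethe
  linear_combination hbethe

theorem statement15_general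
    (a : I → I → ℤ) (σ : Equiv.Perm I) (M : ℕ) (ω : ℂ)
    {N : ℕ} (z : Fin N → ℂ) (lam : Fin N → I → ℕ) (lam0 : I → ℂ)
    (haii : ∀ i, a i i = 2)
    (haneg : ∀ i j, i ≠ j → a i j ≤ 0)
    (i : I) (n0 : ℕ) (hn0 : lam0 i = (n0 : ℂ))
    (y : I → Polynomial ℂ)
    (hy : RepCrit a σ M ω z lam lam0 y) :
    ∃ Y : Polynomial ℂ,
      y i * derivative Y - derivative (y i) * Y =
        X ^ n0 * Tpoly σ M ω z lam i *
          ∏ j ∈ Finset.univ.erase i, (y j) ^ ((-(a i j)).toNat) := by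
  obtain ⟨hgen, hbethe⟩ := hy
  have hsf := (hgen i).2.1
  have hnd := nodup_roots (PerfectField.separable_iff_squarefree.2 hsf)
  refine exists_wronskian_eq (IsAlgClosed.splits _) hsf fun t ht => ?_
  rw [hasLogDerivAt_X_pow_mul_Tpoly_mul_prod hgen ht n0,
    (IsAlgClosed.splits _).eval_derivative_derivative_of_mem_roots hnd ht,
    ← Sres_eq_sum_erase y i t hnd,
    bethe_eq_two_mul_Sres (haii i) (haneg i) hn0 (hbethe i t ht)]
  ring

/-- Proposition 4.3: if λ_0(i) ∈ ℤ_{≥0} and the generic tuple y represents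
a critical point, then the Wronskian equation
  y_i·Y′ − y_i′·Y = x^{λ_0(i)}·T_i·∏_{j≠i} y_j^{−a_{ij}}
has a polynomial solution Y (i.e. y_i^{(i)} is a polynomial). -/
theorem statement15
    (a : I → I → ℤ) (σ : Equiv.Perm I) (M : ℕ) (ω : ℂ)
    {N : ℕ} (z : Fin N → ℂ) (lam : Fin N → I → ℕ) (lam0 : I → ℂ)
    (haii : ∀ i, a i i = 2)
    (haneg : ∀ i j, i ≠ j → a i j ≤ 0)
    (hazero : ∀ i j, i ≠ j → (a i j = 0 ↔ a j i = 0))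
    (hasym : ∀ i j, a (σ i) (σ j) = a i j)
    (hM : 0 < M) (hσM : σ ^ M = 1) (hω : IsPrimitiveRoot ω M)
    (hz0 : ∀ s, z s ≠ 0)
    (hzdisj : ∀ s t : Fin N, s ≠ t → ∀ k l : ℕ, ω ^ k * z s ≠ ω ^ l * z t)
    (hlam0σ : ∀ i, lam0 (σ i) = lam0 i)
    (i : I) (n0 : ℕ) (hn0 : lam0 i = (n0 : ℂ))
    (y : I → Polynomial ℂ)
    (hy : RepCrit a σ M ω z lam lam0 y) :
    ∃ Y : Polynomial ℂ,
      y i * derivative Y - derivative (y i) * Y =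
        X ^ n0 * Tpoly σ M ω z lam i *
          ∏ j ∈ Finset.univ.erase i, (y j) ^ ((-(a i j)).toNat) :=
  statement15_general a σ M ω z lam lam0 haii haneg i n0 hn0 y hy
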